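/- arXiv:1707.04981 — 2 statements merged into one kernel-verified Lean document; each statement's English description precedes it below -/
import Mathlib

section
/- In the finite-horizon setting with horizon N: (i) for every Borel set S ⊆ 𝕋×𝕏 one has Θⁿ(S) = Θ^N(S) for all n ≥ N, and Θ^N(S) is an equilibrium (Θ(Θ^N(S)) = Θ^N(S)); (ii) for any two Borel sets S, S' ⊆ 𝕋×𝕏, Θ^N(S) = Θ^N(S'). Consequently, there exists a unique equilibrium. -/
open MeasureTheory ProbabilityTheory Set Filter Topology
open scoped ENNReal ENat

noncomputable section

/-- The σ-algebra generated by the first `n+1` coordinates of the path space: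
the natural filtration of the coordinate process at time `n`. -/
def pathSigma (𝕏 : Type*) [m : MeasurableSpace 𝕏] (n : ℕ) : MeasurableSpace (ℕ → 𝕏) :=
  ⨆ i ∈ Finset.range (n + 1), MeasurableSpace.comap (fun ω : ℕ → 𝕏 => ω i) m

/-- `Pr` is the family of laws of the time-homogeneous Markov chain with one-step
transition kernel `Q`: under `Pr x` the chain starts at `x`, and the Markov property
`Pr^x(X_{n+1} ∈ A | 𝓕_n) = Q(X_n, A)` holds. -/
structure IsMarkovChainLaw {𝕏 : Type*} [MeasurableSpace 𝕏]
    (Pr : Kernel 𝕏 (ℕ → 𝕏)) (Q : Kernel 𝕏 𝕏) : Prop where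
  start : ∀ x : 𝕏, Pr x {ω | ω 0 = x} = 1
  markov : ∀ (x : 𝕏) (n : ℕ) (B : Set (ℕ → 𝕏)), MeasurableSet[pathSigma 𝕏 n] B →
    ∀ A : Set 𝕏, MeasurableSet A →
      Pr x (B ∩ {ω | ω (n + 1) ∈ A}) = ∫⁻ ω in B, Q (ω n) A ∂(Pr x)

/-- The capped hitting time `ρ(t,x,S) = min (inf {s ≥ t+1 : (s, X_s) ∈ S}) N` along
the path `ω`, where `ω s` represents the state `X_{t+s}` of the chain started at time `t`. -/
def hitTimeFin {𝕏 : Type*} (N t : ℕ) (S : Set (ℕ × 𝕏)) (ω : ℕ → 𝕏) : ℕ :=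
  sInf {s : ℕ | (t + 1 ≤ s ∧ (s, ω (s - t)) ∈ S) ∨ s = N}

/-- The objective value `J(t, x, ρ(t,x,S)) = 𝔼^{t,x}[δ(ρ(t,x,S) − t) f(X_{ρ(t,x,S)})]`. -/
def valJFin {𝕏 : Type*} [MeasurableSpace 𝕏] (Pr : Kernel 𝕏 (ℕ → 𝕏)) (δ : ℕ → ℝ) (f : 𝕏 → ℝ)
    (N t : ℕ) (S : Set (ℕ × 𝕏)) (x : 𝕏) : ℝ :=
  ∫ ω, δ (hitTimeFin N t S ω - t) * f (ω (hitTimeFin N t S ω - t)) ∂(Pr x)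

/-- The finite-horizon operator `Θ(S) = {(t,x) ∈ 𝕋×𝕏 : f(x) ≥ J(t, x, ρ(t,x,S))}`,
where `𝕋 = {0, 1, ..., N−1}`. -/
def ΘFin {𝕏 : Type*} [MeasurableSpace 𝕏] (Pr : Kernel 𝕏 (ℕ → 𝕏)) (δ : ℕ → ℝ) (f : 𝕏 → ℝ)
    (N : ℕ) (S : Set (ℕ × 𝕏)) : Set (ℕ × 𝕏) :=
  {p | p.1 < N ∧ valJFin Pr δ f N p.1 S p.2 ≤ f p.2}

/-! The value `J(t, x, ρ(t,x,S))` only looks at `S` strictly after time `t`, so `Θ(S)` restricted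
to times `≥ m` only depends on `S` restricted to times `≥ m + 1`. Any two subsets of `𝕋 × 𝕏`
agree (vacuously) from time `N` on, hence after `N` steps of backward induction `Θᴺ(S)` no longer
depends on `S`. As `Θ` maps every set into `𝕋 × 𝕏`, this gives `Θ(Θᴺ(S)) = Θᴺ(Θ(S)) = Θᴺ(S)`, and
every equilibrium `E` satisfies `E = Θᴺ(E) = Θᴺ(∅)`; `Θ` preserves Borel sets, so `Θᴺ(∅)` is one. -/

namespace Function

variable {α : Type*} {Φ : α → α} {s : Set α} {N : ℕ}

theorem iterate_eq_of_le_of_iterate_const (hΦ : MapsTo Φ s s)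
    (hconst : ∀ x ∈ s, ∀ y ∈ s, Φ^[N] x = Φ^[N] y) {x : α} (hx : x ∈ s) {n : ℕ} (hn : N ≤ n) :
    Φ^[n] x = Φ^[N] x := by
  rw [← Nat.add_sub_cancel' hn, iterate_add_apply]
  exact hconst _ (hΦ.iterate _ hx) x hx

theorem isFixedPt_iterate_of_iterate_const (hΦ : MapsTo Φ s s)
    (hconst : ∀ x ∈ s, ∀ y ∈ s, Φ^[N] x = Φ^[N] y) {x : α} (hx : x ∈ s) :
    IsFixedPt Φ (Φ^[N] x) := by
  rw [IsFixedPt, ← iterate_succ_apply' Φ N x]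
  exact iterate_eq_of_le_of_iterate_const hΦ hconst hx N.le_succ

theorem IsFixedPt.eq_iterate_of_iterate_const (hconst : ∀ x ∈ s, ∀ y ∈ s, Φ^[N] x = Φ^[N] y)
    {x y : α} (hy : y ∈ s) (hfix : IsFixedPt Φ y) (hx : x ∈ s) : y = Φ^[N] x :=
  (hfix.iterate N).symm.trans (hconst y hy x hx)

end Function

section BackwardInduction

variable {𝕏 : Type*}

theorem hitTimeFin_congr {N t : ℕ} {S S' : Set (ℕ × 𝕏)}
    (h : ∀ p : ℕ × 𝕏, t < p.1 → (p ∈ S ↔ p ∈ S')) (ω : ℕ → 𝕏) :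
    hitTimeFin N t S ω = hitTimeFin N t S' ω := by
  unfold hitTimeFin
  congr 1
  ext s
  exact or_congr_left (and_congr_right (h (s, ω (s - t))))

variable [MeasurableSpace 𝕏] (Pr : Kernel 𝕏 (ℕ → 𝕏)) (δ : ℕ → ℝ) (f : 𝕏 → ℝ)

theorem valJFin_congr {N t : ℕ} {S S' : Set (ℕ × 𝕏)}
    (h : ∀ p : ℕ × 𝕏, t < p.1 → (p ∈ S ↔ p ∈ S')) (x : 𝕏) :
    valJFin Pr δ f N t S x = valJFin Pr δ f N t S' x := by
  simp only [valJFin, hitTimeFin_congr h]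

theorem ΘFin_subset (N : ℕ) (S : Set (ℕ × 𝕏)) : ΘFin Pr δ f N S ⊆ {p | p.1 < N} :=
  fun _ hp => hp.1

theorem mem_ΘFin_congr {N m : ℕ} {S S' : Set (ℕ × 𝕏)}
    (h : ∀ p : ℕ × 𝕏, m + 1 ≤ p.1 → (p ∈ S ↔ p ∈ S')) {p : ℕ × 𝕏} (hp : m ≤ p.1) :
    p ∈ ΘFin Pr δ f N S ↔ p ∈ ΘFin Pr δ f N S' := by
  have hJ : valJFin Pr δ f N p.1 S p.2 = valJFin Pr δ f N p.1 S' p.2 :=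
    valJFin_congr Pr δ f (fun q hq => h q (by omega)) p.2
  simp only [ΘFin, mem_ofPred_eq, hJ]

theorem mem_iterate_ΘFin_congr {N : ℕ} (k m : ℕ) {S S' : Set (ℕ × 𝕏)}
    (h : ∀ p : ℕ × 𝕏, m + k ≤ p.1 → (p ∈ S ↔ p ∈ S')) {p : ℕ × 𝕏} (hp : m ≤ p.1) :
    p ∈ (ΘFin Pr δ f N)^[k] S ↔ p ∈ (ΘFin Pr δ f N)^[k] S' := by
  induction k generalizing S S' with
  | zero => exact h p hp
  | succ k ih =>
    simp only [Function.iterate_succ_apply]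
    exact ih fun q hq => mem_ΘFin_congr Pr δ f (fun r hr => h r (by omega)) hq

theorem iterate_ΘFin_eq_of_subset {N : ℕ} {S S' : Set (ℕ × 𝕏)}
    (hS : S ⊆ {p | p.1 < N}) (hS' : S' ⊆ {p | p.1 < N}) :
    (ΘFin Pr δ f N)^[N] S = (ΘFin Pr δ f N)^[N] S' := by
  ext p
  refine mem_iterate_ΘFin_congr Pr δ f N 0 (fun q hq => ?_) (Nat.zero_le _)
  have hq_late : ¬q.1 < N := by omega
  exact iff_of_false (fun hqS => hq_late (hS hqS)) (fun hqS' => hq_late (hS' hqS'))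

end BackwardInduction

theorem measurable_apply_of_measurable_index {ι X : Type*} [Countable ι] [MeasurableSpace ι]
    [MeasurableSingletonClass ι] [MeasurableSpace X] {k : (ι → X) → ι}
    (hk : Measurable k) : Measurable fun ω : ι → X => ω (k ω) :=
  (measurable_from_prod_countable_left (f := fun p : (ι → X) × ι => p.1 p.2)
    measurable_pi_apply).comp (measurable_id.prodMk hk)

section Measurability

variable {𝕏 : Type*} [MeasurableSpace 𝕏]

theorem measurable_hitTimeFin {N t : ℕ} {S : Set (ℕ × 𝕏)} (hS : MeasurableSet S) :
    Measurable (hitTimeFin N t S) := by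
  classical
  have hN : ∀ ω : ℕ → 𝕏, {s | (t + 1 ≤ s ∧ (s, ω (s - t)) ∈ S) ∨ s = N}.Nonempty :=
    fun _ => ⟨N, Or.inr rfl⟩
  have hfind : hitTimeFin N t S = fun ω => Nat.find (hN ω) :=
    funext fun ω => by rw [hitTimeFin, Nat.sInf_def (hN ω)]; congr
  rw [hfind]
  refine measurable_find hN fun s => measurableSet_setOfPred.2 ?_
  exact (measurable_const.and (hS.mem.comp (measurable_const.prodMk (measurable_pi_apply _)))).or
    measurable_const

variable (Pr : Kernel 𝕏 (ℕ → 𝕏)) (δ : ℕ → ℝ) {f : 𝕏 → ℝ}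

theorem measurable_valJFin (hf : Measurable f) (N t : ℕ) {S : Set (ℕ × 𝕏)}
    (hS : MeasurableSet S) : Measurable (valJFin Pr δ f N t S) := by
  have hτ : Measurable fun ω : ℕ → 𝕏 => hitTimeFin N t S ω - t :=
    (measurable_of_countable fun n : ℕ => n - t).comp (measurable_hitTimeFin hS)
  have hpayoff : Measurable fun ω : ℕ → 𝕏 =>
      δ (hitTimeFin N t S ω - t) * f (ω (hitTimeFin N t S ω - t)) :=
    ((measurable_of_countable δ).comp hτ).mul
    (hf.comp (measurable_apply_of_measurable_index hτ))
  exact (hpayoff.stronglyMeasurable.integral_kernel (κ := Pr)).measurable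

theorem measurableSet_ΘFin (hf : Measurable f) (N : ℕ) {S : Set (ℕ × 𝕏)}
    (hS : MeasurableSet S) : MeasurableSet (ΘFin Pr δ f N S) := by
  have hJ : Measurable fun p : ℕ × 𝕏 => valJFin Pr δ f N p.1 S p.2 :=
    measurable_from_prod_countable_right fun t => measurable_valJFin Pr δ hf N t hS
  exact (measurable_fst (MeasurableSet.of_discrete (s := {t | t < N}))).inter
    (measurableSet_le hJ (hf.comp measurable_snd))

end Measurability

theorem finite_horizon_unique_equilibrium_general
    {𝕏 : Type*} [MeasurableSpace 𝕏]
    (Pr : Kernel 𝕏 (ℕ → 𝕏))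
    (f : 𝕏 → ℝ) (hf_meas : Measurable f)
    (δ : ℕ → ℝ)
    (N : ℕ) :
    (∀ S : Set (ℕ × 𝕏), MeasurableSet S → S ⊆ {p : ℕ × 𝕏 | p.1 < N} →
      (∀ n : ℕ, N ≤ n → (ΘFin Pr δ f N)^[n] S = (ΘFin Pr δ f N)^[N] S) ∧
      ΘFin Pr δ f N ((ΘFin Pr δ f N)^[N] S) = (ΘFin Pr δ f N)^[N] S) ∧
    (∀ S S' : Set (ℕ × 𝕏), MeasurableSet S → S ⊆ {p : ℕ × 𝕏 | p.1 < N} →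
      MeasurableSet S' → S' ⊆ {p : ℕ × 𝕏 | p.1 < N} →
      (ΘFin Pr δ f N)^[N] S = (ΘFin Pr δ f N)^[N] S') ∧
    (∃! E : Set (ℕ × 𝕏), MeasurableSet E ∧ ΘFin Pr δ f N E = E) := by
  set Θ := ΘFin Pr δ f N
  set 𝒮 : Set (Set (ℕ × 𝕏)) := {S | S ⊆ {p | p.1 < N}}
  have hmaps : MapsTo Θ 𝒮 𝒮 := fun S _ => ΘFin_subset Pr δ f N S
  have hconst : ∀ S ∈ 𝒮, ∀ S' ∈ 𝒮, Θ^[N] S = Θ^[N] S' :=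
    fun _ hS _ hS' => iterate_ΘFin_eq_of_subset Pr δ f hS hS'
  have hmeas : MapsTo Θ {S | MeasurableSet S} {S | MeasurableSet S} :=
    fun _ hS => measurableSet_ΘFin Pr δ hf_meas N hS
  have hfix : ∀ S ∈ 𝒮, Function.IsFixedPt Θ (Θ^[N] S) :=
    fun _ hS => Function.isFixedPt_iterate_of_iterate_const hmaps hconst hS
  refine ⟨fun S _ hS => ⟨fun n hn => Function.iterate_eq_of_le_of_iterate_const hmaps hconst hS hn,
      hfix S hS⟩, fun S S' _ hS _ hS' => hconst S hS S' hS',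
    Θ^[N] ∅, ⟨hmeas.iterate N (by simp), hfix ∅ (empty_subset _)⟩, ?_⟩
  rintro E ⟨-, hE⟩
  exact Function.IsFixedPt.eq_iterate_of_iterate_const hconst (hE ▸ ΘFin_subset Pr δ f N E) hE
    (empty_subset _)

/-- In the finite-horizon setting: (i) for every Borel `S ⊆ 𝕋×𝕏`, `Θⁿ(S) = Θᴺ(S)` for
all `n ≥ N` and `Θᴺ(S)` is an equilibrium; (ii) `Θᴺ(S)` does not depend on `S`.
Consequently there exists a unique equilibrium. -/
theorem finite_horizon_unique_equilibrium
    {𝕏 : Type*} [TopologicalSpace 𝕏] [PolishSpace 𝕏] [MeasurableSpace 𝕏] [BorelSpace 𝕏]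
    (Pr : Kernel 𝕏 (ℕ → 𝕏)) [IsMarkovKernel Pr] (Q : Kernel 𝕏 𝕏) [IsMarkovKernel Q]
    (hchain : IsMarkovChainLaw Pr Q)
    (f : 𝕏 → ℝ) (hf_meas : Measurable f) (hf_nonneg : ∀ x, 0 ≤ f x)
    (hf_bdd : ∃ C : ℝ, ∀ x, f x ≤ C)
    (δ : ℕ → ℝ) (hδ_mem : ∀ k, δ k ∈ Set.Icc (0 : ℝ) 1) (hδ_anti : StrictAnti δ)
    (hδ_zero : δ 0 = 1) (hδ_lim : Tendsto δ atTop (𝓝 0))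
    (N : ℕ) (hN : 0 < N) :
    (∀ S : Set (ℕ × 𝕏), MeasurableSet S → S ⊆ {p : ℕ × 𝕏 | p.1 < N} →
      (∀ n : ℕ, N ≤ n → (ΘFin Pr δ f N)^[n] S = (ΘFin Pr δ f N)^[N] S) ∧
      ΘFin Pr δ f N ((ΘFin Pr δ f N)^[N] S) = (ΘFin Pr δ f N)^[N] S) ∧
    (∀ S S' : Set (ℕ × 𝕏), MeasurableSet S → S ⊆ {p : ℕ × 𝕏 | p.1 < N} →
      MeasurableSet S' → S' ⊆ {p : ℕ × 𝕏 | p.1 < N} →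
      (ΘFin Pr δ f N)^[N] S = (ΘFin Pr δ f N)^[N] S') ∧
    (∃! E : Set (ℕ × 𝕏), MeasurableSet E ∧ ΘFin Pr δ f N E = E) :=
  finite_horizon_unique_equilibrium_general Pr f hf_meas δ N

end
end

section
/- Suppose the discount function satisfies δ(i)δ(j) ≤ δ(i+j) for all i,j ∈ ℕ. Then for any nonempty Borel set S ⊆ 𝕏 with Θ(S) ⊆ S, one has J(x, ρ(x,S)) ≤ J(x, ρ(x,Θ(S))) for all x ∈ 𝕏; in particular, Θ²(S) ⊆ Θ(S). -/
open MeasureTheory ProbabilityTheory Set Filter Topology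
open scoped ENNReal ENat

noncomputable section

/-- The first hitting time `ρ(x,S) = inf {t ≥ 1 : X_t ∈ S}` along the path `ω`
(equal to `⊤` if `S` is never reached at a time `≥ 1`). -/
def hitTime {𝕏 : Type*} (S : Set 𝕏) (ω : ℕ → 𝕏) : ℕ∞ :=
  sInf {n : ℕ∞ | ∃ t : ℕ, n = (t : ℕ∞) ∧ 1 ≤ t ∧ ω t ∈ S}

/-- The discounted payoff `δ(ρ(x,S)) f(X_{ρ(x,S)})` collected along the path `ω`,
with the convention that it vanishes when `S` is never hit. -/
def stopPayoff {𝕏 : Type*} (δ : ℕ → ℝ) (f : 𝕏 → ℝ) (S : Set 𝕏) (ω : ℕ → 𝕏) : ℝ :=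
  if hitTime S ω = ⊤ then 0
  else δ (hitTime S ω).toNat * f (ω (hitTime S ω).toNat)

/-- The objective value `J(x, ρ(x,S)) = 𝔼^x[δ(ρ(x,S)) f(X_{ρ(x,S)})]`. -/
def valJ {𝕏 : Type*} [MeasurableSpace 𝕏] (Pr : Kernel 𝕏 (ℕ → 𝕏)) (δ : ℕ → ℝ) (f : 𝕏 → ℝ)
    (S : Set 𝕏) (x : 𝕏) : ℝ :=
  ∫ ω, stopPayoff δ f S ω ∂(Pr x)

/-- The operator `Θ(S) = {x ∈ 𝕏 : f(x) ≥ J(x, ρ(x,S))}`. -/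
def Θ {𝕏 : Type*} [MeasurableSpace 𝕏] (Pr : Kernel 𝕏 (ℕ → 𝕏)) (δ : ℕ → ℝ) (f : 𝕏 → ℝ)
    (S : Set 𝕏) : Set 𝕏 :=
  {x | valJ Pr δ f S x ≤ f x}

/-- A Borel set `S ⊆ 𝕏` is an equilibrium if `Θ(S) = S`. -/
def IsEquilibrium {𝕏 : Type*} [MeasurableSpace 𝕏] (Pr : Kernel 𝕏 (ℕ → 𝕏)) (δ : ℕ → ℝ)
    (f : 𝕏 → ℝ) (S : Set 𝕏) : Prop :=
  MeasurableSet S ∧ Θ Pr δ f S = S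

/-- The value `V(x,S) = max (f x) (J(x, ρ(x,S)))` associated with an equilibrium `S`. -/
def valV {𝕏 : Type*} [MeasurableSpace 𝕏] (Pr : Kernel 𝕏 (ℕ → 𝕏)) (δ : ℕ → ℝ) (f : 𝕏 → ℝ)
    (S : Set 𝕏) (x : 𝕏) : ℝ :=
  max (f x) (valJ Pr δ f S x)

/-! Write `L_T(n, x) = 𝔼^x[δ(n + ρ_T) f(X_{ρ_T})]` for the value of stopping at the first visit
to `T` when `n` periods have already elapsed, and let `T = Θ(S) ⊆ S`. Decompose both values at the
first visit `t` of `S`: the `S`-payoff is `δ(n + t) f(X_t)`, and so is the `T`-payoff if `X_t ∈ T`;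
otherwise, by the Markov property, the `T`-payoff continues with `L_T(n + t, X_t)`. On `S \ T` we
have `f < L_S(0, ·)`, and decreasing impatience gives `δ(m) L_S(0, ·) ≤ L_S(m, ·)`. An induction on
`k` therefore yields `L_S(n, x) ≤ L_T(n, x) + δ(n + k) sup f`, and `k → ∞` gives
`J(x, ρ(x, S)) ≤ J(x, ρ(x, Θ(S)))`. -/

section PathSpace

variable {𝕏 : Type*} [MeasurableSpace 𝕏]

lemma comap_eval_le_pathSigma {i n : ℕ} (hi : i ≤ n) :
    MeasurableSpace.comap (fun ω : ℕ → 𝕏 => ω i) ‹_› ≤ pathSigma 𝕏 n :=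
  le_iSup₂ (f := fun i (_ : i ∈ Finset.range (n + 1)) =>
    MeasurableSpace.comap (fun ω : ℕ → 𝕏 => ω i) ‹_›) i (Finset.mem_range_succ_iff.mpr hi)

lemma measurableSet_pathSigma_eval {i n : ℕ} (hi : i ≤ n) {A : Set 𝕏} (hA : MeasurableSet A) :
    MeasurableSet[pathSigma 𝕏 n] {ω : ℕ → 𝕏 | ω i ∈ A} :=
  comap_eval_le_pathSigma hi _ ⟨A, hA, rfl⟩

lemma pathSigma_mono : Monotone (pathSigma 𝕏) := fun _ _ hnm =>
  iSup₂_le fun _ hi => comap_eval_le_pathSigma ((Finset.mem_range_succ_iff.mp hi).trans hnm)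

lemma pathSigma_le_pi (n : ℕ) : pathSigma 𝕏 n ≤ MeasurableSpace.pi :=
  iSup₂_le fun i _ => (measurable_pi_apply i).comap_le

def pathShift (t : ℕ) (ω : ℕ → 𝕏) : ℕ → 𝕏 := fun i => ω (t + i)

lemma measurable_pathShift (t : ℕ) : Measurable (pathShift (𝕏 := 𝕏) t) :=
  measurable_pi_lambda _ fun i => measurable_pi_apply (t + i)

end PathSpace

section HitTime

variable {𝕏 : Type*} {S T : Set 𝕏} {ω : ℕ → 𝕏}

lemma hitTime_le {t : ℕ} (ht : 1 ≤ t) (hω : ω t ∈ S) : hitTime S ω ≤ t :=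
  sInf_le ⟨t, rfl, ht, hω⟩

lemma hitTime_eq_top_iff : hitTime S ω = ⊤ ↔ ∀ t, 1 ≤ t → ω t ∉ S := by
  refine ⟨fun h t ht hω => ENat.natCast_ne_top t (sInf_eq_top.mp h _ ⟨t, rfl, ht, hω⟩), ?_⟩
  rw [hitTime, sInf_eq_top]
  rintro h _ ⟨t, rfl, ht, hω⟩
  exact absurd hω (h t ht)

lemma hitTime_eq_coe_iff {t : ℕ} :
    hitTime S ω = t ↔ 1 ≤ t ∧ ω t ∈ S ∧ ∀ u, 1 ≤ u → u < t → ω u ∉ S := by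
  constructor
  · intro h
    have hne : {n : ℕ∞ | ∃ t : ℕ, n = t ∧ 1 ≤ t ∧ ω t ∈ S}.Nonempty := by
      by_contra hempty
      rw [Set.not_nonempty_iff_eq_empty] at hempty
      simp [hitTime, hempty] at h
    obtain ⟨t', ht', h1, h2⟩ := csInf_mem hne
    obtain rfl : t = t' := by exact_mod_cast h.symm.trans ht'
    refine ⟨h1, h2, fun u hu hut hω => ?_⟩
    have := h ▸ hitTime_le hu hω
    exact absurd hut (not_lt.mpr (by exact_mod_cast this))
  · rintro ⟨h1, h2, h3⟩
    refine le_antisymm (hitTime_le h1 h2) (le_sInf ?_)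
    rintro _ ⟨u, rfl, hu, hω⟩
    exact_mod_cast not_lt.mp fun hut => h3 u hu hut hω

lemma hitTime_eq_top_of_subset (hTS : T ⊆ S) (h : hitTime S ω = ⊤) : hitTime T ω = ⊤ :=
  hitTime_eq_top_iff.mpr fun u hu hT => hitTime_eq_top_iff.mp h u hu (hTS hT)

lemma hitTime_eq_of_subset {t : ℕ} (hTS : T ⊆ S) (h : hitTime S ω = t) (hω : ω t ∈ T) :
    hitTime T ω = t := by
  obtain ⟨h1, -, h3⟩ := hitTime_eq_coe_iff.mp h
  exact hitTime_eq_coe_iff.mpr ⟨h1, hω, fun u hu hut hT => h3 u hu hut (hTS hT)⟩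

lemma hitTime_eq_add_hitTime_pathShift {t : ℕ} (hω : ∀ u, 1 ≤ u → u ≤ t → ω u ∉ T) :
    hitTime T ω = t + hitTime T (pathShift t ω) := by
  cases hs : hitTime T (pathShift t ω) with
  | top =>
    refine hitTime_eq_top_iff.mpr fun u hu hT => ?_
    rcases le_or_gt u t with hut | hut
    · exact hω u hu hut hT
    · obtain ⟨r, rfl⟩ := Nat.exists_eq_add_of_lt hut
      exact hitTime_eq_top_iff.mp hs (r + 1) (by omega) hT
  | coe s =>
    obtain ⟨h1, h2, h3⟩ := hitTime_eq_coe_iff.mp hs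
    rw [← Nat.cast_add, hitTime_eq_coe_iff]
    refine ⟨by omega, h2, fun u hu hut hT => ?_⟩
    rcases le_or_gt u t with hut' | hut'
    · exact hω u hu hut' hT
    · obtain ⟨r, rfl⟩ := Nat.exists_eq_add_of_lt hut'
      exact h3 (r + 1) (by omega) (by omega) hT

def hitEvent (S : Set 𝕏) (t : ℕ) : Set (ℕ → 𝕏) := {ω | hitTime S ω = t}

lemma pairwise_disjoint_hitEvent :
    Pairwise (Function.onFun Disjoint (hitEvent S : ℕ → Set (ℕ → 𝕏))) :=
  fun _ _ hab => Set.disjoint_left.mpr fun _ ha hb => hab (by exact_mod_cast ha.symm.trans hb)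

lemma tsum_indicator_hitEvent_of_eq {g : ℕ → (ℕ → 𝕏) → ℝ≥0∞} {t : ℕ} (h : hitTime S ω = t) :
    ∑' u, (hitEvent S u).indicator (g u) ω = g t ω := by
  rw [tsum_eq_single t fun u hu => Set.indicator_of_notMem (s := hitEvent S u)
    (fun hω : hitTime S ω = u => hu (by exact_mod_cast hω.symm.trans h)) _]
  exact Set.indicator_of_mem (s := hitEvent S t) h _

lemma tsum_indicator_hitEvent_of_eq_top {g : ℕ → (ℕ → 𝕏) → ℝ≥0∞} (h : hitTime S ω = ⊤) :
    ∑' u, (hitEvent S u).indicator (g u) ω = 0 :=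
  ENNReal.tsum_eq_zero.mpr fun u => Set.indicator_of_notMem (s := hitEvent S u)
    (fun hω : hitTime S ω = u => ENat.natCast_ne_top u (hω.symm.trans h)) _

variable [MeasurableSpace 𝕏]

lemma measurableSet_pathSigma_hitEvent (hS : MeasurableSet S) (t : ℕ) :
    MeasurableSet[pathSigma 𝕏 t] (hitEvent S t) := by
  have : hitEvent S t = {_ω | 1 ≤ t} ∩ {ω | ω t ∈ S} ∩ ⋂ u, {ω | 1 ≤ u → u < t → ω u ∉ S} := by
    ext ω; simp [hitEvent, hitTime_eq_coe_iff, and_assoc]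
  rw [this]
  refine (MeasurableSet.const _ |>.inter (measurableSet_pathSigma_eval le_rfl hS)).inter
    (.iInter fun u => ?_)
  by_cases hu : 1 ≤ u ∧ u < t
  · have : {ω : ℕ → 𝕏 | 1 ≤ u → u < t → ω u ∉ S} = {ω | ω u ∈ S}ᶜ := by ext; simp [hu.1, hu.2]
    exact this ▸ (measurableSet_pathSigma_eval hu.2.le hS).compl
  · have : {ω : ℕ → 𝕏 | 1 ≤ u → u < t → ω u ∉ S} = Set.univ := by ext; simp; omega
    exact this ▸ MeasurableSet.univ

lemma measurableSet_hitEvent (hS : MeasurableSet S) (t : ℕ) : MeasurableSet (hitEvent S t) :=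
  pathSigma_le_pi t _ (measurableSet_pathSigma_hitEvent hS t)

end HitTime

section Cylinder

variable {𝕏 : Type*}

lemma setOf_forall_le_succ (j m : ℕ) (A : ℕ → Set 𝕏) :
    {ω : ℕ → 𝕏 | ∀ i ≤ j + 1, ω (m + i) ∈ A i} =
      {ω | ω m ∈ A 0} ∩ {ω | ∀ i ≤ j, ω (m + 1 + i) ∈ A (i + 1)} := by
  ext ω
  simp only [Set.mem_ofPred_eq, Set.mem_inter_iff]
  refine ⟨fun h => ⟨h 0 (Nat.zero_le _), fun i hi => ?_⟩, fun ⟨h0, h⟩ i hi => ?_⟩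
  · simpa [add_assoc, add_comm 1 i] using h (i + 1) (by omega)
  · cases i with
    | zero => exact h0
    | succ i => simpa [add_assoc, add_comm 1 i] using h i (by omega)

lemma Set.pi_finset_eq_setOf_forall_le (s : Finset ℕ) (A : ℕ → Set 𝕏) :
    (s : Set ℕ).pi A = {η | ∀ i ≤ s.sup id, η i ∈ (s.piecewise A fun _ => Set.univ) i} := by
  ext η
  simp only [Set.mem_pi, Finset.mem_coe, Set.mem_ofPred_eq]
  refine ⟨fun h i _ => ?_, fun h i hi => ?_⟩
  · by_cases hi : i ∈ s
    · simpa [hi] using h i hi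
    · simp [hi]
  · simpa [hi] using h i (Finset.le_sup (f := id) hi)

variable [MeasurableSpace 𝕏]

lemma setLIntegral_inter_preimage_eval (μ : Measure (ℕ → 𝕏)) {B : Set (ℕ → 𝕏)} {A : Set 𝕏}
    (hA : MeasurableSet A) (m : ℕ) (g : 𝕏 → ℝ≥0∞) :
    ∫⁻ ω in B ∩ {ω | ω m ∈ A}, g (ω m) ∂μ = ∫⁻ ω in B, A.indicator g (ω m) ∂μ := by
  have hA' : MeasurableSet {ω : ℕ → 𝕏 | ω m ∈ A} := measurable_pi_apply m hA
  rw [Set.inter_comm, ← Measure.restrict_restrict hA', ← lintegral_indicator hA']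
  rfl

def cylinderProb (Q : Kernel 𝕏 𝕏) : ℕ → (ℕ → Set 𝕏) → 𝕏 → ℝ≥0∞
  | 0, A => (A 0).indicator 1
  | j + 1, A => (A 0).indicator fun y => ∫⁻ z, cylinderProb Q j (fun i => A (i + 1)) z ∂Q y

lemma measurable_cylinderProb (Q : Kernel 𝕏 𝕏) [IsSFiniteKernel Q] (j : ℕ)
    {A : ℕ → Set 𝕏} (hA : ∀ i, MeasurableSet (A i)) :
    Measurable (cylinderProb Q j A) := by
  induction j generalizing A with
  | zero => exact measurable_const.indicator (hA 0)
  | succ j ih => exact (ih fun i => hA (i + 1)).lintegral_kernel.indicator (hA 0)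

end Cylinder

namespace IsMarkovChainLaw

variable {𝕏 : Type*} [MeasurableSpace 𝕏] {Pr : Kernel 𝕏 (ℕ → 𝕏)} {Q : Kernel 𝕏 𝕏}

/- `{ω | ω 0 = y}` need not be measurable (singletons are not assumed measurable), so `start` is
only used through monotonicity of the outer measure. -/
lemma map_eval_zero [IsMarkovKernel Pr] (h : IsMarkovChainLaw Pr Q) (y : 𝕏) :
    (Pr y).map (fun ω => ω 0) = Measure.dirac y := by
  ext A hA
  have hA' : MeasurableSet ((fun ω : ℕ → 𝕏 => ω 0) ⁻¹' A) := measurable_pi_apply 0 hA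
  rw [Measure.map_apply (measurable_pi_apply 0) hA, Measure.dirac_apply' _ hA]
  by_cases hy : y ∈ A
  · rw [Set.indicator_of_mem hy, Pi.one_apply]
    refine le_antisymm prob_le_one (h.start y ▸ measure_mono fun ω (hω : ω 0 = y) => ?_)
    exact show ω 0 ∈ A from hω ▸ hy
  · rw [Set.indicator_of_notMem hy, ← prob_compl_eq_one_iff hA']
    refine le_antisymm prob_le_one (h.start y ▸ measure_mono fun ω (hω : ω 0 = y) => ?_)
    exact show ω 0 ∉ A from hω ▸ hy

lemma lintegral_comp_eval_zero [IsMarkovKernel Pr] (h : IsMarkovChainLaw Pr Q) (y : 𝕏)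
    {g : 𝕏 → ℝ≥0∞} (hg : Measurable g) : ∫⁻ ω, g (ω 0) ∂Pr y = g y := by
  rw [← lintegral_map hg (measurable_pi_apply 0), h.map_eval_zero, lintegral_dirac' _ hg]

lemma map_restrict_eval_succ (h : IsMarkovChainLaw Pr Q) (x : 𝕏) {n : ℕ} {B : Set (ℕ → 𝕏)}
    (hB : MeasurableSet[pathSigma 𝕏 n] B) :
    ((Pr x).restrict B).map (fun ω => ω (n + 1)) =
      (((Pr x).restrict B).map (fun ω => ω n)).bind Q := by
  ext A hA
  rw [Measure.map_apply (measurable_pi_apply _) hA, Measure.bind_apply hA Q.aemeasurable,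
    lintegral_map (Q.measurable_coe hA) (measurable_pi_apply n),
    Measure.restrict_apply (measurable_pi_apply _ hA), Set.inter_comm]
  exact h.markov x n B hB A hA

lemma setLIntegral_comp_eval_succ [IsSFiniteKernel Q] (h : IsMarkovChainLaw Pr Q) (x : 𝕏)
    {n : ℕ} {B : Set (ℕ → 𝕏)} (hB : MeasurableSet[pathSigma 𝕏 n] B) {g : 𝕏 → ℝ≥0∞}
    (hg : Measurable g) :
    ∫⁻ ω in B, g (ω (n + 1)) ∂Pr x = ∫⁻ ω in B, ∫⁻ y, g y ∂Q (ω n) ∂Pr x := by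
  rw [← lintegral_map hg (measurable_pi_apply _), h.map_restrict_eval_succ x hB,
    Measure.lintegral_bind Q.aemeasurable hg.aemeasurable,
    lintegral_map hg.lintegral_kernel (measurable_pi_apply n)]

lemma measure_inter_cylinder [IsSFiniteKernel Q] (h : IsMarkovChainLaw Pr Q) (x : 𝕏) (j : ℕ)
    {A : ℕ → Set 𝕏} (hA : ∀ i, MeasurableSet (A i)) {m : ℕ} {B : Set (ℕ → 𝕏)}
    (hB : MeasurableSet[pathSigma 𝕏 m] B) :
    Pr x (B ∩ {ω | ∀ i ≤ j, ω (m + i) ∈ A i}) = ∫⁻ ω in B, cylinderProb Q j A (ω m) ∂Pr x := by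
  induction j generalizing m B A with
  | zero =>
    simp only [nonpos_iff_eq_zero, forall_eq, add_zero]
    rw [cylinderProb, ← setLIntegral_inter_preimage_eval _ (hA 0)]
    simp only [Pi.one_apply, setLIntegral_one]
  | succ j ih =>
    have hB' : MeasurableSet[pathSigma 𝕏 (m + 1)] (B ∩ {ω | ω m ∈ A 0}) :=
      (pathSigma_mono m.le_succ _ hB).inter (measurableSet_pathSigma_eval m.le_succ (hA 0))
    rw [setOf_forall_le_succ, ← Set.inter_assoc, ih (fun i => hA (i + 1)) hB',
      h.setLIntegral_comp_eval_succ x (hB.inter (measurableSet_pathSigma_eval le_rfl (hA 0)))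
        (measurable_cylinderProb Q j fun i => hA (i + 1)),
      setLIntegral_inter_preimage_eval _ (hA 0) m
        fun y => ∫⁻ z, cylinderProb Q j (fun i => A (i + 1)) z ∂Q y]
    rfl

lemma measure_cylinder [IsMarkovKernel Pr] [IsSFiniteKernel Q] (h : IsMarkovChainLaw Pr Q)
    (y : 𝕏) (j : ℕ) {A : ℕ → Set 𝕏} (hA : ∀ i, MeasurableSet (A i)) :
    Pr y {η | ∀ i ≤ j, η i ∈ A i} = cylinderProb Q j A y := by
  simpa [h.lintegral_comp_eval_zero y (measurable_cylinderProb Q j hA)] using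
    h.measure_inter_cylinder y j hA (m := 0) MeasurableSet.univ

lemma map_restrict_pathShift [IsMarkovKernel Pr] [IsSFiniteKernel Q]
    (h : IsMarkovChainLaw Pr Q) (x : 𝕏) {m : ℕ} {B : Set (ℕ → 𝕏)}
    (hB : MeasurableSet[pathSigma 𝕏 m] B) :
    ((Pr x).restrict B).map (pathShift m) = ((Pr x).restrict B).bind fun ω => Pr (ω m) := by
  have hPr : Measurable fun ω : ℕ → 𝕏 => Pr (ω m) := Pr.measurable.comp (measurable_pi_apply m)
  refine ext_of_generate_finite _ generateFrom_squareCylinders.symm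
    (isPiSystem_squareCylinders (fun _ => MeasurableSpace.isPiSystem_measurableSet)
      fun _ => .univ) ?_ ?_
  · rintro _ ⟨s, A, hA, rfl⟩
    have hA' : ∀ i, MeasurableSet ((s.piecewise A fun _ => Set.univ) i) := fun i => by
      by_cases hi : i ∈ s
      · simpa [hi] using hA i (Set.mem_univ i)
      · simp [hi]
    have hC : MeasurableSet ((s : Set ℕ).pi A) :=
      .pi s.countable_toSet fun i _ => hA i (Set.mem_univ i)
    rw [Measure.map_apply (measurable_pathShift m) hC, Measure.bind_apply hC hPr.aemeasurable,
      Measure.restrict_apply (measurable_pathShift m hC), Set.inter_comm,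
      Set.pi_finset_eq_setOf_forall_le]
    exact (h.measure_inter_cylinder x _ hA' hB).trans
      (lintegral_congr fun ω => (h.measure_cylinder (ω m) _ hA').symm)
  · rw [Measure.map_apply (measurable_pathShift m) .univ, Measure.bind_apply .univ hPr.aemeasurable]
    simp

lemma setLIntegral_comp_pathShift [IsMarkovKernel Pr] [IsSFiniteKernel Q]
    (h : IsMarkovChainLaw Pr Q) (x : 𝕏) {m : ℕ} {B : Set (ℕ → 𝕏)}
    (hB : MeasurableSet[pathSigma 𝕏 m] B) {F : (ℕ → 𝕏) → ℝ≥0∞}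
    (hF : Measurable F) :
    ∫⁻ ω in B, F (pathShift m ω) ∂Pr x = ∫⁻ ω in B, ∫⁻ η, F η ∂Pr (ω m) ∂Pr x := by
  rw [← lintegral_map hF (measurable_pathShift m), h.map_restrict_pathShift x hB]
  exact Measure.lintegral_bind (Pr.measurable.comp (measurable_pi_apply m)).aemeasurable
    hF.aemeasurable

end IsMarkovChainLaw

section Payoff

variable {𝕏 : Type*} (δ : ℕ → ℝ) (f : 𝕏 → ℝ)

/-- `stopPayoff` in `ℝ≥0∞`, discounted as if `n` periods had already elapsed. -/
def discountedPayoff (S : Set 𝕏) (n : ℕ) (ω : ℕ → 𝕏) : ℝ≥0∞ :=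
  if hitTime S ω = ⊤ then 0
  else ENNReal.ofReal (δ (n + (hitTime S ω).toNat) * f (ω (hitTime S ω).toNat))

variable {δ f} {S T : Set 𝕏} {n : ℕ} {ω : ℕ → 𝕏}

lemma discountedPayoff_of_hitTime_eq_top (h : hitTime S ω = ⊤) :
    discountedPayoff δ f S n ω = 0 :=
  if_pos h

lemma discountedPayoff_of_hitTime_eq {t : ℕ} (h : hitTime S ω = t) :
    discountedPayoff δ f S n ω = ENNReal.ofReal (δ (n + t) * f (ω t)) := by
  rw [discountedPayoff, if_neg (h ▸ ENat.natCast_ne_top t), h, ENat.toNat_natCast]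

lemma discountedPayoff_eq_tsum_indicator (hTS : T ⊆ S) :
    discountedPayoff δ f T n ω =
      ∑' t, (hitEvent S t).indicator (discountedPayoff δ f T n) ω := by
  cases h : hitTime S ω with
  | top =>
    rw [tsum_indicator_hitEvent_of_eq_top h,
      discountedPayoff_of_hitTime_eq_top (hitTime_eq_top_of_subset hTS h)]
  | coe t => rw [tsum_indicator_hitEvent_of_eq h]

lemma discountedPayoff_eq_pathShift (hTS : T ⊆ S) {t : ℕ} (ht : hitTime S ω = t)
    (hω : ω t ∉ T) :
    discountedPayoff δ f T n ω = discountedPayoff δ f T (n + t) (pathShift t ω) := by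
  have hT : hitTime T ω = t + hitTime T (pathShift t ω) := by
    refine hitTime_eq_add_hitTime_pathShift fun u hu hut hu' => ?_
    obtain ⟨-, -, hfirst⟩ := hitTime_eq_coe_iff.mp ht
    rcases hut.lt_or_eq with hut | rfl
    exacts [hfirst u hu hut (hTS hu'), hω hu']
  cases hs : hitTime T (pathShift t ω) with
  | top =>
    rw [discountedPayoff_of_hitTime_eq_top hs,
      discountedPayoff_of_hitTime_eq_top (by rw [hT, hs]; rfl)]
  | coe s =>
    rw [discountedPayoff_of_hitTime_eq hs,
      discountedPayoff_of_hitTime_eq (by rw [hT, hs]; norm_cast), add_assoc]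
    rfl

variable [MeasurableSpace 𝕏]

lemma measurable_discountedPayoff (hS : MeasurableSet S) (hf : Measurable f) (n : ℕ) :
    Measurable (discountedPayoff δ f S n) := by
  have : discountedPayoff δ f S n = fun ω => ∑' t,
      (hitEvent S t).indicator (fun ω => ENNReal.ofReal (δ (n + t) * f (ω t))) ω := by
    ext ω
    cases h : hitTime S ω with
    | top => rw [tsum_indicator_hitEvent_of_eq_top h, discountedPayoff_of_hitTime_eq_top h]
    | coe t => rw [tsum_indicator_hitEvent_of_eq h, discountedPayoff_of_hitTime_eq h]
  rw [this]
  exact .tsum fun t => (ENNReal.measurable_ofReal.comp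
    ((hf.comp (measurable_pi_apply t)).const_mul _)).indicator (measurableSet_hitEvent hS t)

end Payoff

lemma tsum_setLIntegral_le_tsum_setLIntegral_add {α : Type*} [MeasurableSpace α]
    {μ : Measure α} [IsProbabilityMeasure μ] {E : ℕ → Set α} (hE : ∀ t, MeasurableSet (E t))
    (hdisj : Pairwise (Function.onFun Disjoint E)) {u v : ℕ → α → ℝ≥0∞} {c : ℝ≥0∞}
    (huv : ∀ t, ∀ a ∈ E t, u t a ≤ v t a + c) :
    ∑' t, ∫⁻ a in E t, u t a ∂μ ≤ ∑' t, ∫⁻ a in E t, v t a ∂μ + c :=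
  calc ∑' t, ∫⁻ a in E t, u t a ∂μ
      ≤ ∑' t, (∫⁻ a in E t, v t a ∂μ + c * μ (E t)) := ENNReal.tsum_le_tsum fun t =>
        (setLIntegral_mono' (hE t) (huv t)).trans_eq
          (by rw [lintegral_add_right _ measurable_const, setLIntegral_const])
    _ = ∑' t, ∫⁻ a in E t, v t a ∂μ + c * μ (⋃ t, E t) := by
        rw [ENNReal.tsum_add, ENNReal.tsum_mul_left, measure_iUnion hdisj hE]
    _ ≤ ∑' t, ∫⁻ a in E t, v t a ∂μ + c := by gcongr; exact mul_le_of_le_one_right' prob_le_one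

section Value

variable {𝕏 : Type*} [MeasurableSpace 𝕏] (Pr : Kernel 𝕏 (ℕ → 𝕏)) (δ : ℕ → ℝ) (f : 𝕏 → ℝ)

def discountedValue (S : Set 𝕏) (n : ℕ) (x : 𝕏) : ℝ≥0∞ :=
  ∫⁻ ω, discountedPayoff δ f S n ω ∂Pr x

variable {Pr δ f} {S T : Set 𝕏}

lemma measurable_discountedValue [IsSFiniteKernel Pr] (hS : MeasurableSet S)
    (hf : Measurable f) (n : ℕ) : Measurable (discountedValue Pr δ f S n) :=
  (measurable_discountedPayoff hS hf n).lintegral_kernel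

lemma valJ_eq_toReal_discountedValue (hS : MeasurableSet S) (hf : Measurable f)
    (hδ0 : ∀ k, 0 ≤ δ k) (hf0 : ∀ y, 0 ≤ f y) (x : 𝕏) :
    valJ Pr δ f S x = (discountedValue Pr δ f S 0 x).toReal := by
  have hpay : ∀ ω, stopPayoff δ f S ω = (discountedPayoff δ f S 0 ω).toReal := fun ω => by
    rw [stopPayoff, discountedPayoff]
    split_ifs
    · rfl
    · rw [zero_add, ENNReal.toReal_ofReal (mul_nonneg (hδ0 _) (hf0 _))]
  simp_rw [valJ, hpay]
  refine integral_toReal (measurable_discountedPayoff hS hf 0).aemeasurable (.of_forall fun ω => ?_)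
  rw [discountedPayoff]
  split_ifs <;> simp

lemma measurableSet_Θ [IsSFiniteKernel Pr] (hS : MeasurableSet S) (hf : Measurable f)
    (hδ0 : ∀ k, 0 ≤ δ k) (hf0 : ∀ y, 0 ≤ f y) : MeasurableSet (Θ Pr δ f S) := by
  simp only [Θ, valJ_eq_toReal_discountedValue hS hf hδ0 hf0]
  exact measurableSet_le (measurable_discountedValue hS hf 0).ennreal_toReal hf

lemma ofReal_le_discountedValue_of_notMem_Θ (hS : MeasurableSet S) (hf : Measurable f)
    (hδ0 : ∀ k, 0 ≤ δ k) (hf0 : ∀ y, 0 ≤ f y) {y : 𝕏} (hy : y ∉ Θ Pr δ f S) :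
    ENNReal.ofReal (f y) ≤ discountedValue Pr δ f S 0 y := by
  refine (ENNReal.ofReal_le_ofReal (not_le.mp hy).le).trans ?_
  rw [valJ_eq_toReal_discountedValue hS hf hδ0 hf0]
  exact ENNReal.ofReal_toReal_le

lemma discountedValue_le [IsMarkovKernel Pr] {C : ℝ} (hδ0 : ∀ k, 0 ≤ δ k) (hδa : Antitone δ)
    (hf0 : ∀ y, 0 ≤ f y) (hfC : ∀ y, f y ≤ C) (n : ℕ) (x : 𝕏) :
    discountedValue Pr δ f S n x ≤ ENNReal.ofReal (δ n * C) := by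
  refine (lintegral_mono fun ω => ?_).trans_eq (by simp : ∫⁻ _, ENNReal.ofReal (δ n * C) ∂Pr x = _)
  rw [discountedPayoff]
  split_ifs
  · exact bot_le
  · exact ENNReal.ofReal_le_ofReal
      (mul_le_mul (hδa (Nat.le_add_right _ _)) (hfC _) (hf0 _) (hδ0 n))

lemma ofReal_mul_discountedValue_le (hδ0 : ∀ k, 0 ≤ δ k) (hf0 : ∀ y, 0 ≤ f y)
    (hDI : ∀ i j : ℕ, δ i * δ j ≤ δ (i + j)) (m : ℕ) (y : 𝕏) :
    ENNReal.ofReal (δ m) * discountedValue Pr δ f S 0 y ≤ discountedValue Pr δ f S m y := by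
  rw [discountedValue, ← lintegral_const_mul' _ _ ENNReal.ofReal_ne_top]
  refine lintegral_mono fun ω => ?_
  cases h : hitTime S ω with
  | top => simp [discountedPayoff_of_hitTime_eq_top h]
  | coe t =>
    rw [discountedPayoff_of_hitTime_eq h, discountedPayoff_of_hitTime_eq h,
      ← ENNReal.ofReal_mul (hδ0 m), zero_add, ← mul_assoc]
    exact ENNReal.ofReal_le_ofReal (mul_le_mul_of_nonneg_right (hDI m t) (hf0 _))

variable {Q : Kernel 𝕏 𝕏} [IsMarkovKernel Pr] [IsSFiniteKernel Q]

lemma setLIntegral_hitEvent_discountedPayoff [DecidablePred (· ∈ T)]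
    (hchain : IsMarkovChainLaw Pr Q) (hTS : T ⊆ S) (hS : MeasurableSet S)
    (hT : MeasurableSet T) (hf : Measurable f) (n t : ℕ) (x : 𝕏) :
    ∫⁻ ω in hitEvent S t, discountedPayoff δ f T n ω ∂Pr x =
      ∫⁻ ω in hitEvent S t, T.piecewise (fun y => ENNReal.ofReal (δ (n + t) * f y))
        (discountedValue Pr δ f T (n + t)) (ω t) ∂Pr x := by
  have hE := measurableSet_pathSigma_hitEvent hS t
  have hD := measurableSet_pathSigma_eval (le_refl t) hT
  have hED : MeasurableSet[pathSigma 𝕏 t] (hitEvent S t \ {ω | ω t ∈ T}) := hE.diff hD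
  rw [← lintegral_inter_add_sdiff _ (hitEvent S t) (pathSigma_le_pi t _ hD),
    ← lintegral_inter_add_sdiff _ (hitEvent S t) (pathSigma_le_pi t _ hD)]
  congr 1
  · refine setLIntegral_congr_fun (pathSigma_le_pi t _ (hE.inter hD)) fun ω ⟨hω, hωT⟩ => ?_
    rw [discountedPayoff_of_hitTime_eq (hitTime_eq_of_subset hTS hω hωT),
      Set.piecewise_eq_of_mem T _ _ (show ω t ∈ T from hωT)]
  · calc ∫⁻ ω in hitEvent S t \ {ω | ω t ∈ T}, discountedPayoff δ f T n ω ∂Pr x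
        = ∫⁻ ω in hitEvent S t \ {ω | ω t ∈ T},
            discountedPayoff δ f T (n + t) (pathShift t ω) ∂Pr x :=
          setLIntegral_congr_fun (pathSigma_le_pi t _ hED) fun ω ⟨hω, hωT⟩ =>
            discountedPayoff_eq_pathShift hTS hω hωT
      _ = ∫⁻ ω in hitEvent S t \ {ω | ω t ∈ T}, discountedValue Pr δ f T (n + t) (ω t) ∂Pr x :=
          hchain.setLIntegral_comp_pathShift x hED (measurable_discountedPayoff hT hf _)
      _ = _ := setLIntegral_congr_fun (pathSigma_le_pi t _ hED) fun ω ⟨_, hωT⟩ =>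
          (Set.piecewise_eq_of_notMem T _ _ (show ω t ∉ T from hωT)).symm

lemma discountedValue_eq_tsum [DecidablePred (· ∈ T)] (hchain : IsMarkovChainLaw Pr Q)
    (hTS : T ⊆ S) (hS : MeasurableSet S) (hT : MeasurableSet T) (hf : Measurable f)
    (n : ℕ) (x : 𝕏) :
    discountedValue Pr δ f T n x = ∑' t, ∫⁻ ω in hitEvent S t,
      T.piecewise (fun y => ENNReal.ofReal (δ (n + t) * f y))
        (discountedValue Pr δ f T (n + t)) (ω t) ∂Pr x := by
  rw [discountedValue, lintegral_congr fun ω => discountedPayoff_eq_tsum_indicator hTS,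
    lintegral_tsum fun t => ((measurable_discountedPayoff hT hf n).indicator
      (measurableSet_hitEvent hS t)).aemeasurable]
  exact tsum_congr fun t => (lintegral_indicator (measurableSet_hitEvent hS t) _).trans
    (setLIntegral_hitEvent_discountedPayoff hchain hTS hS hT hf n t x)

end Value

section Comparison

variable {𝕏 : Type*} [MeasurableSpace 𝕏] {Pr : Kernel 𝕏 (ℕ → 𝕏)} {Q : Kernel 𝕏 𝕏}
  [IsMarkovKernel Pr] [IsSFiniteKernel Q] {δ : ℕ → ℝ} {f : 𝕏 → ℝ} {S T : Set 𝕏} {C : ℝ}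

lemma discountedValue_le_add_of_subset (hchain : IsMarkovChainLaw Pr Q) (hTS : T ⊆ S)
    (hS : MeasurableSet S) (hT : MeasurableSet T) (hf : Measurable f) (hf0 : ∀ y, 0 ≤ f y)
    (hfC : ∀ y, f y ≤ C) (hδ0 : ∀ k, 0 ≤ δ k) (hδa : Antitone δ)
    (hDI : ∀ i j : ℕ, δ i * δ j ≤ δ (i + j))
    (hstop : ∀ y ∈ S, y ∉ T → ENNReal.ofReal (f y) ≤ discountedValue Pr δ f S 0 y)
    (k n : ℕ) (x : 𝕏) :
    discountedValue Pr δ f S n x ≤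
      discountedValue Pr δ f T n x + ENNReal.ofReal (δ (n + k) * C) := by
  classical
  induction k generalizing n x with
  | zero => exact (discountedValue_le hδ0 hδa hf0 hfC n x).trans le_add_self
  | succ k ih =>
    rw [discountedValue_eq_tsum hchain subset_rfl hS hS hf,
      discountedValue_eq_tsum hchain hTS hS hT hf]
    refine tsum_setLIntegral_le_tsum_setLIntegral_add (measurableSet_hitEvent hS)
      pairwise_disjoint_hitEvent fun t ω hω => ?_
    obtain ⟨ht, hωS, -⟩ := hitTime_eq_coe_iff.mp hω
    rw [Set.piecewise_eq_of_mem S _ _ hωS]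
    by_cases hωT : ω t ∈ T
    · rw [Set.piecewise_eq_of_mem T _ _ hωT]
      exact le_self_add
    rw [Set.piecewise_eq_of_notMem T _ _ hωT]
    calc ENNReal.ofReal (δ (n + t) * f (ω t))
        = ENNReal.ofReal (δ (n + t)) * ENNReal.ofReal (f (ω t)) := ENNReal.ofReal_mul (hδ0 _)
      _ ≤ ENNReal.ofReal (δ (n + t)) * discountedValue Pr δ f S 0 (ω t) := by
          gcongr; exact hstop _ hωS hωT
      _ ≤ discountedValue Pr δ f S (n + t) (ω t) := ofReal_mul_discountedValue_le hδ0 hf0 hDI _ _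
      _ ≤ discountedValue Pr δ f T (n + t) (ω t) + ENNReal.ofReal (δ (n + t + k) * C) := ih _ _
      _ ≤ discountedValue Pr δ f T (n + t) (ω t) + ENNReal.ofReal (δ (n + (k + 1)) * C) := by
          gcongr
          · exact (hf0 (ω t)).trans (hfC _)
          · exact hδa (by omega)

lemma discountedValue_le_of_subset (hchain : IsMarkovChainLaw Pr Q) (hTS : T ⊆ S)
    (hS : MeasurableSet S) (hT : MeasurableSet T) (hf : Measurable f) (hf0 : ∀ y, 0 ≤ f y)
    (hfC : ∀ y, f y ≤ C) (hδ0 : ∀ k, 0 ≤ δ k) (hδa : Antitone δ)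
    (hδ_lim : Tendsto δ atTop (𝓝 0)) (hDI : ∀ i j : ℕ, δ i * δ j ≤ δ (i + j))
    (hstop : ∀ y ∈ S, y ∉ T → ENNReal.ofReal (f y) ≤ discountedValue Pr δ f S 0 y) (x : 𝕏) :
    discountedValue Pr δ f S 0 x ≤ discountedValue Pr δ f T 0 x := by
  have hε : Tendsto (fun k => ENNReal.ofReal (δ k * C)) atTop (𝓝 0) := by
    simpa using ENNReal.tendsto_ofReal (hδ_lim.mul_const C)
  refine ge_of_tendsto' (by simpa using tendsto_const_nhds.add hε) fun k => ?_
  simpa using discountedValue_le_add_of_subset hchain hTS hS hT hf hf0 hfC hδ0 hδa hDI hstop k 0 x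

end Comparison

theorem iterate_improves_general
    {𝕏 : Type*} [MeasurableSpace 𝕏]
    (Pr : Kernel 𝕏 (ℕ → 𝕏)) [IsMarkovKernel Pr] (Q : Kernel 𝕏 𝕏) [IsMarkovKernel Q]
    (hchain : IsMarkovChainLaw Pr Q)
    (f : 𝕏 → ℝ) (hf_meas : Measurable f) (hf_nonneg : ∀ x, 0 ≤ f x)
    (hf_bdd : ∃ C : ℝ, ∀ x, f x ≤ C)
    (δ : ℕ → ℝ) (hδ_mem : ∀ k, δ k ∈ Set.Icc (0 : ℝ) 1) (hδ_anti : StrictAnti δ)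
    (hδ_lim : Tendsto δ atTop (𝓝 0))
    (hDI : ∀ i j : ℕ, δ i * δ j ≤ δ (i + j))
    (S : Set 𝕏) (hS : MeasurableSet S) (hΘS : Θ Pr δ f S ⊆ S) :
    (∀ x : 𝕏, valJ Pr δ f S x ≤ valJ Pr δ f (Θ Pr δ f S) x) ∧
    Θ Pr δ f (Θ Pr δ f S) ⊆ Θ Pr δ f S := by
  obtain ⟨C, hfC⟩ := hf_bdd
  have hδ0 : ∀ k, 0 ≤ δ k := fun k => (hδ_mem k).1
  have hΘ := measurableSet_Θ (Pr := Pr) hS hf_meas hδ0 hf_nonneg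
  have hJ_le : ∀ x, valJ Pr δ f S x ≤ valJ Pr δ f (Θ Pr δ f S) x := fun x => by
    rw [valJ_eq_toReal_discountedValue hS hf_meas hδ0 hf_nonneg,
      valJ_eq_toReal_discountedValue hΘ hf_meas hδ0 hf_nonneg]
    refine ENNReal.toReal_mono (ne_top_of_le_ne_top ENNReal.ofReal_ne_top
      (discountedValue_le hδ0 hδ_anti.antitone hf_nonneg hfC 0 x)) ?_
    exact discountedValue_le_of_subset hchain hΘS hS hΘ hf_meas hf_nonneg hfC hδ0
      hδ_anti.antitone hδ_lim hDI
      (fun _ _ hy => ofReal_le_discountedValue_of_notMem_Θ hS hf_meas hδ0 hf_nonneg hy) x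
  exact ⟨hJ_le, fun x hx => (hJ_le x).trans hx⟩

/-- Under decreasing impatience, if `Θ(S) ⊆ S` for a nonempty Borel set `S`, then
`J(x, ρ(x,S)) ≤ J(x, ρ(x,Θ(S)))` for all `x`; in particular `Θ²(S) ⊆ Θ(S)`. -/
theorem iterate_improves
    {𝕏 : Type*} [TopologicalSpace 𝕏] [PolishSpace 𝕏] [MeasurableSpace 𝕏] [BorelSpace 𝕏]
    (Pr : Kernel 𝕏 (ℕ → 𝕏)) [IsMarkovKernel Pr] (Q : Kernel 𝕏 𝕏) [IsMarkovKernel Q]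
    (hchain : IsMarkovChainLaw Pr Q)
    (f : 𝕏 → ℝ) (hf_meas : Measurable f) (hf_nonneg : ∀ x, 0 ≤ f x)
    (hf_bdd : ∃ C : ℝ, ∀ x, f x ≤ C)
    (δ : ℕ → ℝ) (hδ_mem : ∀ k, δ k ∈ Set.Icc (0 : ℝ) 1) (hδ_anti : StrictAnti δ)
    (hδ_zero : δ 0 = 1) (hδ_lim : Tendsto δ atTop (𝓝 0))
    (hDI : ∀ i j : ℕ, δ i * δ j ≤ δ (i + j))
    (S : Set 𝕏) (hS : MeasurableSet S) (hSne : S.Nonempty) (hΘS : Θ Pr δ f S ⊆ S) :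
    (∀ x : 𝕏, valJ Pr δ f S x ≤ valJ Pr δ f (Θ Pr δ f S) x) ∧
    Θ Pr δ f (Θ Pr δ f S) ⊆ Θ Pr δ f S :=
  iterate_improves_general Pr Q hchain f hf_meas hf_nonneg hf_bdd δ hδ_mem hδ_anti hδ_lim hDI S hS
    hΘS

end
end
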